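/- For every integer n ≥ 1, the function Φ(ρ) := φ₀'(ρ)/φ₀(ρ) is an odd function of ρ ∈ ℝ and is strictly increasing on ℝ. -/

import Mathlib

open Real Filter

noncomputable def b (n : ℕ) (j : ℕ) : ℝ :=
  ∏ ℓ ∈ Finset.Icc 1 j, 1 / (2 * (ℓ : ℝ) * ((n : ℝ) + 2 * ((ℓ : ℝ) - 1)))

noncomputable def phi0 (n : ℕ) (ρ : ℝ) : ℝ := ∑' j : ℕ, b n j * ρ ^ (2 * j)

/-!
Write `φ₀(ρ) = F(ρ²)` with `F(t) = ∑ b_j t^j`, an entire power series. Then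
`Φ(ρ) = 2ρ F'(ρ²) / F(ρ²)` is visibly odd, and the recursion
`b_j = 2(j+1)(n+2j) b_{j+1}` is the differential equation `4t F'' + 2n F' = F`.

Moreover `Φ'(ρ) = W(ρ²) / F(ρ²)²`, where `W = 2FF' + 4t(FF'' - F'²)` is
`φ₀φ₀'' - φ₀'²` written in `t = ρ²`. The differential equation gives
`W' = -2(n-1)(FF'' - F'²)`, hence `2tW' + (n-1)W = 2(n-1)FF' ≥ 0`: the integrating
factor makes `ρ^(n-1) W(ρ²)` nondecreasing on `[0, ∞)`, strictly if `n ≥ 2`, and since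
`W(0) = 1/n` this forces `W > 0`.
-/
open scoped Nat
open Set

noncomputable def powSeries (a : ℕ → ℝ) (x : ℝ) : ℝ := ∑' k, a k * x ^ k

def derivCoeff (a : ℕ → ℝ) (k : ℕ) : ℝ := (k + 1) * a (k + 1)

section PowSeries

variable {a : ℕ → ℝ}

lemma summable_mul_pow (ha : ∀ r, Summable fun k => ‖a k‖ * r ^ k) (x : ℝ) :
    Summable fun k => a k * x ^ k :=
  .of_norm_bounded (ha |x|) fun k => by rw [norm_mul, norm_pow, Real.norm_eq_abs x]

lemma summable_derivCoeff (ha : ∀ r, Summable fun k => ‖a k‖ * r ^ k) (r : ℝ) :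
    Summable fun k => ‖derivCoeff a k‖ * r ^ k := by
  set R := |r| + 1
  have hR : 1 ≤ R := by linarith [abs_nonneg r]
  refine .of_norm_bounded ((summable_nat_add_iff 1).mpr (ha (2 * R))) fun k => ?_
  have hk : (k + 1 : ℝ) ≤ 2 ^ (k + 1) := by exact_mod_cast Nat.lt_two_pow_self.le
  have hr : |r| ^ k ≤ R ^ (k + 1) :=
    (pow_le_pow_left₀ (abs_nonneg r) (by linarith) k).trans (pow_le_pow_right₀ hR k.le_succ)
  calc ‖‖derivCoeff a k‖ * r ^ k‖ = ‖a (k + 1)‖ * ((k + 1) * |r| ^ k) := by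
        simp only [derivCoeff, norm_mul, norm_pow, Real.norm_eq_abs, abs_abs]
        rw [abs_of_nonneg (by positivity : (0 : ℝ) ≤ k + 1)]; ring
    _ ≤ ‖a (k + 1)‖ * (2 * R) ^ (k + 1) := by
        rw [mul_pow]; gcongr

theorem hasDerivAt_powSeries (ha : ∀ r, Summable fun k => ‖a k‖ * r ^ k) (x : ℝ) :
    HasDerivAt (powSeries a) (powSeries (derivCoeff a) x) x := by
  have hshift : powSeries a = fun y => a 0 + ∑' k, a (k + 1) * y ^ (k + 1) := funext fun y => by
    rw [powSeries, (summable_mul_pow ha y).tsum_eq_zero_add, pow_zero, mul_one]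
  set R := |x| + 1
  have hx : x ∈ Ioo (-R) R := abs_lt.mp (by linarith)
  rw [hshift]
  refine HasDerivAt.const_add _ (hasDerivAt_tsum_of_isPreconnected
    (g' := fun k y => derivCoeff a k * y ^ k) (summable_derivCoeff ha R) isOpen_Ioo
    isPreconnected_Ioo (fun k y _ => ?_) (fun k y hy => ?_) hx ?_ hx)
  · refine ((hasDerivAt_pow (k + 1) y).const_mul (a (k + 1))).congr_deriv ?_
    simp only [derivCoeff, Nat.cast_add, Nat.cast_one, Nat.add_sub_cancel]; ring
  · rw [norm_mul, norm_pow]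
    gcongr
    exact (abs_lt.mpr hy).le
  · exact (summable_nat_add_iff 1).mpr (summable_mul_pow ha x)

lemma powSeries_zero (a : ℕ → ℝ) : powSeries a 0 = a 0 := by
  rw [powSeries, tsum_eq_single 0 fun k hk => by simp [hk]]
  simp

lemma le_powSeries (ha : ∀ r, Summable fun k => ‖a k‖ * r ^ k) (ha0 : ∀ k, 0 ≤ a k)
    {x : ℝ} (hx : 0 ≤ x) : a 0 ≤ powSeries a x := by
  simpa [powSeries] using
    (summable_mul_pow ha x).le_tsum 0 fun k _ => mul_nonneg (ha0 k) (pow_nonneg hx k)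

lemma hasSum_mul_powSeries_derivCoeff (ha : ∀ r, Summable fun k => ‖a k‖ * r ^ k) (x : ℝ) :
    HasSum (fun k => k * a k * x ^ k) (x * powSeries (derivCoeff a) x) := by
  refine (hasSum_nat_add_iff' 1).mp ?_
  simpa [powSeries, derivCoeff, pow_succ, mul_comm, mul_left_comm, mul_assoc] using
    (summable_mul_pow (summable_derivCoeff ha) x).hasSum.mul_left x

end PowSeries

variable {n : ℕ}

lemma b_zero : b n 0 = 1 := by simp [b]

lemma b_succ (k : ℕ) : b n (k + 1) = b n k / (2 * (k + 1) * (n + 2 * k)) := by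
  rw [b, b, Finset.prod_Icc_succ_top (by omega)]
  push_cast
  ring

lemma b_nonneg (k : ℕ) : 0 ≤ b n k :=
  Finset.prod_nonneg fun ℓ hℓ => by
    have : (1 : ℝ) ≤ ℓ := by exact_mod_cast (Finset.mem_Icc.mp hℓ).1
    have : (0 : ℝ) ≤ n := n.cast_nonneg
    positivity

lemma b_one (n : ℕ) : b n 1 = 1 / (2 * n) := by
  simp [b_succ, b_zero]

lemma b_one_pos (hn : 1 ≤ n) : 0 < b n 1 := by
  rw [b_one]; positivity

lemma b_eq_mul_b_succ (hn : 1 ≤ n) (k : ℕ) :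
    b n k = 2 * (k + 1) * (n + 2 * k) * b n (k + 1) := by
  have : (1 : ℝ) ≤ n := by exact_mod_cast hn
  rw [b_succ]
  field_simp

lemma b_le_inv_factorial (hn : 1 ≤ n) (k : ℕ) : b n k ≤ 1 / k ! := by
  induction k with
  | zero => simp [b_zero]
  | succ k ih =>
    have : (1 : ℝ) ≤ n := by exact_mod_cast hn
    calc b n (k + 1) ≤ b n k / (k + 1) := by
          rw [b_succ]
          exact div_le_div_of_nonneg_left (b_nonneg k) (by positivity) (by nlinarith)
      _ ≤ 1 / k ! / (k + 1) := by gcongr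
      _ = 1 / (k + 1)! := by
          rw [Nat.factorial_succ]; push_cast; field_simp

lemma summable_b (hn : 1 ≤ n) (r : ℝ) : Summable fun k => ‖b n k‖ * r ^ k :=
  .of_norm_bounded (Real.summable_pow_div_factorial |r|) fun k => by
    rw [norm_mul, norm_norm, norm_pow, Real.norm_eq_abs r, div_eq_mul_one_div, mul_comm]
    gcongr
    rw [Real.norm_of_nonneg (b_nonneg k)]
    exact b_le_inv_factorial hn k

lemma phi0_eq_powSeries (n : ℕ) : phi0 n = fun ρ => powSeries (b n) (ρ ^ 2) :=
  funext fun ρ => tsum_congr fun j => by rw [pow_mul]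

lemma powSeries_b_pos (hn : 1 ≤ n) {t : ℝ} (ht : 0 ≤ t) : 0 < powSeries (b n) t :=
  one_pos.trans_le (b_zero (n := n) ▸ le_powSeries (summable_b hn) b_nonneg ht)

lemma powSeries_derivCoeff_b_pos (hn : 1 ≤ n) {t : ℝ} (ht : 0 ≤ t) :
    0 < powSeries (derivCoeff (b n)) t := by
  refine (b_one_pos hn).trans_le ?_
  simpa [derivCoeff] using le_powSeries (summable_derivCoeff (summable_b hn))
    (fun k => mul_nonneg (by positivity) (b_nonneg _)) ht

lemma phi0_pos (hn : 1 ≤ n) (ρ : ℝ) : 0 < phi0 n ρ := by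
  rw [phi0_eq_powSeries]
  exact powSeries_b_pos hn (sq_nonneg ρ)

lemma hasDerivAt_phi0 (hn : 1 ≤ n) (ρ : ℝ) :
    HasDerivAt (phi0 n) (2 * ρ * powSeries (derivCoeff (b n)) (ρ ^ 2)) ρ := by
  rw [phi0_eq_powSeries]
  exact ((hasDerivAt_powSeries (summable_b hn) _).comp ρ (hasDerivAt_pow 2 ρ)).congr_deriv
    (by simp only [Nat.cast_ofNat, Nat.add_one_sub_one, pow_one]; ring)

theorem powSeries_b_ode (hn : 1 ≤ n) (t : ℝ) :
    4 * t * powSeries (derivCoeff (derivCoeff (b n))) t + 2 * n * powSeries (derivCoeff (b n)) t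
      = powSeries (b n) t := by
  have hb := summable_b hn
  have hsum := ((hasSum_mul_powSeries_derivCoeff (summable_derivCoeff hb) t).mul_left 4).add
    ((summable_mul_pow (summable_derivCoeff hb) t).hasSum.mul_left (2 * (n : ℝ)))
  have hF : HasSum (fun k => b n k * t ^ k) (powSeries (b n) t) :=
    (summable_mul_pow hb t).hasSum
  have := hsum.unique (hF.congr_fun fun k => ?_)
  · rw [← this]; unfold powSeries; ring
  · rw [b_eq_mul_b_succ hn, derivCoeff]; ring

noncomputable def wronskian (n : ℕ) (t : ℝ) : ℝ :=
  2 * powSeries (b n) t * powSeries (derivCoeff (b n)) t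
    + 4 * t * (powSeries (b n) t * powSeries (derivCoeff (derivCoeff (b n))) t
      - powSeries (derivCoeff (b n)) t ^ 2)

lemma wronskian_zero (n : ℕ) : wronskian n 0 = 1 / n := by
  simp only [wronskian, powSeries_zero, derivCoeff, b_zero, Nat.cast_zero, zero_add, b_one]
  ring

lemma hasDerivAt_wronskian (hn : 1 ≤ n) (t : ℝ) :
    HasDerivAt (wronskian n)
      (-2 * (n - 1) * (powSeries (b n) t * powSeries (derivCoeff (derivCoeff (b n))) t
        - powSeries (derivCoeff (b n)) t ^ 2)) t := by
  set F := powSeries (b n)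
  set F₁ := powSeries (derivCoeff (b n))
  set F₂ := powSeries (derivCoeff (derivCoeff (b n)))
  have hF : ∀ t, HasDerivAt F (F₁ t) t := hasDerivAt_powSeries (summable_b hn)
  have hF₁ : ∀ t, HasDerivAt F₁ (F₂ t) t :=
    hasDerivAt_powSeries (summable_derivCoeff (summable_b hn))
  have hW : wronskian n = fun t => F t ^ 2 - 2 * (n - 1) * (F t * F₁ t) - 4 * t * F₁ t ^ 2 :=
    funext fun t => by
      unfold wronskian
      linear_combination F t * powSeries_b_ode hn t
  rw [hW]
  refine ((((hF t).fun_pow 2).fun_sub (((hF t).fun_mul (hF₁ t)).const_mul _)).fun_sub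
    (((hasDerivAt_id' t).const_mul 4).fun_mul ((hF₁ t).fun_pow 2))).congr_deriv ?_
  simp only [Nat.cast_ofNat, Nat.add_one_sub_one, pow_one, mul_one]
  linear_combination (-2 * F₁ t) * powSeries_b_ode hn t

lemma exists_hasDerivAt_pow_mul_wronskian (hn : 1 ≤ n) (ρ : ℝ) :
    ∃ v, HasDerivAt (fun ρ => ρ ^ (n - 1) * wronskian n (ρ ^ 2)) v ρ ∧
      ρ * v = 2 * (n - 1) * ρ ^ (n - 1) *
        (powSeries (b n) (ρ ^ 2) * powSeries (derivCoeff (b n)) (ρ ^ 2)) := by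
  refine ⟨_, (hasDerivAt_pow (n - 1) ρ).mul
    ((hasDerivAt_wronskian hn _).comp ρ (hasDerivAt_pow 2 ρ)), ?_⟩
  have hpow : ρ * (((n - 1 : ℕ) : ℝ) * ρ ^ (n - 1 - 1)) = (n - 1) * ρ ^ (n - 1) := by
    rw [Nat.cast_sub hn, Nat.cast_one]
    rcases (n - 1).eq_zero_or_pos with h | h
    · have : (n : ℝ) = 1 := by exact_mod_cast (by omega : n = 1)
      simp [this]
    · rw [← mul_pow_sub_one h.ne' ρ]; ring
  have hW : wronskian n (ρ ^ 2) - 4 * ρ ^ 2 * (powSeries (b n) (ρ ^ 2) *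
      powSeries (derivCoeff (derivCoeff (b n))) (ρ ^ 2) - powSeries (derivCoeff (b n)) (ρ ^ 2) ^ 2)
        = 2 * powSeries (b n) (ρ ^ 2) * powSeries (derivCoeff (b n)) (ρ ^ 2) := by
    unfold wronskian; ring
  linear_combination wronskian n (ρ ^ 2) * hpow + (n - 1) * ρ ^ (n - 1) * hW

theorem wronskian_pos (hn : 1 ≤ n) {t : ℝ} (ht : 0 ≤ t) : 0 < wronskian n t := by
  choose v hv hv_mul using exists_hasDerivAt_pow_mul_wronskian hn
  set V := fun ρ : ℝ => ρ ^ (n - 1) * wronskian n (ρ ^ 2)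
  have hVcont : ContinuousOn V (Ici 0) := fun ρ _ => (hv ρ).continuousAt.continuousWithinAt
  have hV' : ∀ ρ ∈ interior (Ici (0 : ℝ)), HasDerivWithinAt V (v ρ) (interior (Ici 0)) ρ :=
    fun ρ _ => (hv ρ).hasDerivWithinAt
  obtain ⟨ρ, hρ, rfl⟩ : ∃ ρ, 0 ≤ ρ ∧ t = ρ ^ 2 := ⟨√t, sqrt_nonneg t, (sq_sqrt ht).symm⟩
  rcases hn.eq_or_lt with rfl | hn2
  · have hmono := monotoneOn_of_hasDerivWithinAt_nonneg (convex_Ici 0) hVcont hV'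
      fun x hx => by
        rw [interior_Ici] at hx
        exact nonneg_of_mul_nonneg_right (by rw [hv_mul]; norm_num) hx
    calc (0 : ℝ) < wronskian 1 0 := by rw [wronskian_zero]; norm_num
      _ ≤ wronskian 1 (ρ ^ 2) := by simpa [V] using hmono self_mem_Ici hρ hρ
  rcases hρ.eq_or_lt with rfl | hρ
  · rw [zero_pow two_ne_zero, wronskian_zero]; positivity
  have hmono := strictMonoOn_of_hasDerivWithinAt_pos (convex_Ici 0) hVcont hV' fun x hx => by
    rw [interior_Ici] at hx
    refine pos_of_mul_pos_right ?_ hx.le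
    have := mul_pos (powSeries_b_pos hn (sq_nonneg x))
      (powSeries_derivCoeff_b_pos hn (sq_nonneg x))
    have : (0 : ℝ) < n - 1 := by
      have : (1 : ℝ) < n := by exact_mod_cast hn2
      linarith
    have : (0 : ℝ) < x := hx
    rw [hv_mul]
    positivity
  have := hmono self_mem_Ici hρ.le hρ
  simp only [V, zero_pow (by omega : n - 1 ≠ 0), zero_mul] at this
  exact pos_of_mul_pos_right this (pow_nonneg hρ.le _)

lemma deriv_phi0 (hn : 1 ≤ n) :
    deriv (phi0 n) = fun ρ => 2 * ρ * powSeries (derivCoeff (b n)) (ρ ^ 2) :=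
  funext fun ρ => (hasDerivAt_phi0 hn ρ).deriv

lemma hasDerivAt_deriv_phi0_div_phi0 (hn : 1 ≤ n) (ρ : ℝ) :
    HasDerivAt (fun ρ => deriv (phi0 n) ρ / phi0 n ρ)
      (wronskian n (ρ ^ 2) / phi0 n ρ ^ 2) ρ := by
  have hF₁ := (hasDerivAt_powSeries (summable_derivCoeff (summable_b hn)) (ρ ^ 2)).comp ρ
    (hasDerivAt_pow 2 ρ)
  rw [deriv_phi0 hn]
  refine ((((hasDerivAt_id' ρ).const_mul 2).fun_mul hF₁).div (hasDerivAt_phi0 hn ρ)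
    (phi0_pos hn ρ).ne').congr_deriv ?_
  simp only [phi0_eq_powSeries, wronskian, Function.comp_apply, Nat.cast_ofNat,
    Nat.add_one_sub_one, pow_one]
  ring

theorem stmt6 (n : ℕ) (hn : 1 ≤ n) :
    (∀ ρ : ℝ, deriv (phi0 n) (-ρ) / phi0 n (-ρ) = -(deriv (phi0 n) ρ / phi0 n ρ)) ∧
    StrictMono (fun ρ : ℝ => deriv (phi0 n) ρ / phi0 n ρ) := by
  refine ⟨fun ρ => ?_, strictMono_of_hasDerivAt_pos (hasDerivAt_deriv_phi0_div_phi0 hn)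
    fun ρ => div_pos (wronskian_pos hn (sq_nonneg ρ)) (pow_pos (phi0_pos hn ρ) 2)⟩
  rw [deriv_phi0 hn, phi0_eq_powSeries]
  simp only [neg_sq]
  ring
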